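/- arXiv:2001.03956 — 2 statements merged into one kernel-verified Lean document; each statement's English description precedes it below -/
import Mathlib

section
/- For any n ≥ 1, let c be a real-valued cost function on the subsets of N = {1, …, n} that is antitone with respect to inclusion (S ⊆ T implies c(T) ≤ c(S)). Let v(S) := c(∅) − c(S), let φ_j(v) be the Shapley value of j for (N, v), and let e_j := c(∅)/n − φ_j(v). Then for every j ∈ N, e_j ≤ c({j})/n. -/
open Finset

/-- The Shapley value of player `j` in the game `(N, v)` on `N = Fin n`:
`φ_j(v) = Σ_{S ⊆ N \ {j}} (|S|! (n-|S|-1)! / n!) (v (S ∪ {j}) - v S)`. -/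
noncomputable def shapley (n : ℕ) (v : Finset (Fin n) → ℝ) (j : Fin n) : ℝ :=
  ∑ S ∈ ((Finset.univ : Finset (Fin n)).erase j).powerset,
    ((S.card.factorial * (n - S.card - 1).factorial : ℕ) : ℝ) / (n.factorial : ℝ)
      * (v (insert j S) - v S)

/-! A monotone game has nonnegative marginal contributions, so the Shapley value of `j`
dominates its `S = ∅` summand, which is `(v {j} - v ∅) / n`. For the value game of an
antitone cost this reads `φ_j ≥ (c ∅ - c {j}) / n`, i.e. `e_j ≤ c {j} / n`. -/

theorem factorial_pred_div_factorial {n : ℕ} (hn : 0 < n) :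
    ((n - 1).factorial : ℝ) / n.factorial = 1 / n := by
  rw [← Nat.mul_factorial_pred hn.ne', Nat.cast_mul]
  field_simp

theorem singleton_gain_div_le_shapley {n : ℕ} {v : Finset (Fin n) → ℝ} (hv : Monotone v)
    (j : Fin n) : (v {j} - v ∅) / n ≤ shapley n v j := by
  have hterm : ∀ S ∈ (univ.erase j).powerset,
      0 ≤ ((S.card.factorial * (n - S.card - 1).factorial : ℕ) : ℝ) / (n.factorial : ℝ)
        * (v (insert j S) - v S) :=
    fun S _ => mul_nonneg (by positivity) (sub_nonneg.mpr (hv (subset_insert j S)))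
  calc (v {j} - v ∅) / n
      = ((0 : ℕ).factorial * (n - 0 - 1).factorial : ℕ) / (n.factorial : ℝ)
          * (v (insert j ∅) - v ∅) := by
        rw [Nat.factorial_zero, one_mul, Nat.sub_zero,
          factorial_pred_div_factorial (Fin.pos j), insert_empty]
        ring
    _ ≤ shapley n v j := single_le_sum hterm (empty_mem_powerset _)

theorem svea_le_singleton_cost_div_general (n : ℕ)
    (c : Finset (Fin n) → ℝ)
    (hc : ∀ S T : Finset (Fin n), S ⊆ T → c T ≤ c S)
    (v : Finset (Fin n) → ℝ) (hv : ∀ S, v S = c ∅ - c S)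
    (e : Fin n → ℝ) (he : ∀ j, e j = c ∅ / (n : ℝ) - shapley n v j) :
    ∀ j : Fin n, e j ≤ c {j} / (n : ℝ) := by
  have hmono : Monotone v := fun S T hST => by
    simp only [hv]
    linarith [hc S T hST]
  intro j
  have hgain : (v {j} - v ∅) / n = c ∅ / n - c {j} / n := by
    rw [hv, hv]
    ring
  have := singleton_gain_div_le_shapley hmono j
  rw [he j]
  linarith

/-- For an inclusion-antitone cost function `c` on subsets of `N = {1, …, n}`,
the SVEA `e_j = c ∅ / n - φ_j(v)` of the value game `v S = c ∅ - c S`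
satisfies `e_j ≤ c {j} / n` for every `j`. -/
theorem svea_le_singleton_cost_div (n : ℕ) (hn : 1 ≤ n)
    (c : Finset (Fin n) → ℝ)
    (hc : ∀ S T : Finset (Fin n), S ⊆ T → c T ≤ c S)
    (v : Finset (Fin n) → ℝ) (hv : ∀ S, v S = c ∅ - c S)
    (e : Fin n → ℝ) (he : ∀ j, e j = c ∅ / (n : ℝ) - shapley n v j) :
    ∀ j : Fin n, e j ≤ c {j} / (n : ℝ) :=
  svea_le_singleton_cost_div_general n c hc v hv e he
end

section
/- (Theorem 2: individual rationality of SVEA.) Let n ≥ 1, m ≥ 1 and fix a dataset of m labeled points (x_i, y_i) with x_i ∈ ℝ^n and y_i ∈ {−1, 1}. Let v(S) := tr_er(∅) − tr_er(S) for S ⊆ N = {1, …, n}, let φ_j(v) be the Shapley value of feature j for the game (N, v), and set e_j := tr_er(∅)/n − φ_j(v). Then the SVEA satisfies individual rationality: for every feature j ∈ N, e_j ≤ tr_er({j}). -/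
/-
The game `v S = tr_er ∅ - tr_er S` is monotone, because a classifier using the features in `S`
is also one using any larger set of features. So every marginal contribution in the Shapley
value of `j` is nonnegative, and dropping all but the one of the empty coalition, which carries
weight `1/n`, gives `φ_j(v) ≥ (tr_er ∅ - tr_er {j}) / n`. Hence `e_j ≤ tr_er {j} / n ≤ tr_er {j}`.
-/

open Finset

/-- Hinge-loss training error of the best linear classifier that uses only the
features in `S` (plus an intercept), for the dataset `(x i, y i), i = 1, …, m`. -/
noncomputable def trEr (n m : ℕ) (x : Fin m → Fin n → ℝ) (y : Fin m → ℝ)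
    (S : Finset (Fin n)) : ℝ :=
  sInf { r : ℝ | ∃ (w : Fin n → ℝ) (b : ℝ),
    r = (1 / (m : ℝ)) * ∑ i : Fin m, max 0 (1 - y i * (∑ j ∈ S, w j * x i j + b)) }

theorem shapley_weight_empty {n : ℕ} (hn : n ≠ 0) :
    (((∅ : Finset (Fin n)).card.factorial
        * (n - (∅ : Finset (Fin n)).card - 1).factorial : ℕ) : ℝ) / (n.factorial : ℝ)
      = 1 / n := by
  rw [card_empty, Nat.factorial_zero, one_mul, Nat.sub_zero, ← Nat.mul_factorial_pred hn]
  push_cast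
  field_simp

theorem marginal_div_le_shapley {n : ℕ} {v : Finset (Fin n) → ℝ} (hmono : Monotone v)
    (j : Fin n) : (v {j} - v ∅) / n ≤ shapley n v j := by
  have hterm_nonneg : ∀ S ∈ (univ.erase j).powerset,
      0 ≤ ((S.card.factorial * (n - S.card - 1).factorial : ℕ) : ℝ) / (n.factorial : ℝ)
        * (v (insert j S) - v S) :=
    fun S _ => mul_nonneg (by positivity) (sub_nonneg.mpr (hmono (subset_insert j S)))
  calc (v {j} - v ∅) / n
      = ((((∅ : Finset (Fin n)).card.factorial
          * (n - (∅ : Finset (Fin n)).card - 1).factorial : ℕ) : ℝ) / (n.factorial : ℝ))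
          * (v (insert j ∅) - v ∅) := by
        rw [shapley_weight_empty (Fin.pos j).ne', insert_empty, one_div_mul_eq_div]
    _ ≤ shapley n v j := single_le_sum hterm_nonneg (empty_mem_powerset _)

section TrainingError

variable {n m : ℕ} (x : Fin m → Fin n → ℝ) (y : Fin m → ℝ)

theorem trEr_nonneg (S : Finset (Fin n)) : 0 ≤ trEr n m x y S := by
  apply Real.sInf_nonneg
  rintro r ⟨w, b, rfl⟩
  exact mul_nonneg (by positivity) (sum_nonneg fun i _ => le_max_left _ _)

theorem trEr_antitone : Antitone (trEr n m x y) := by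
  intro S T hST
  refine csInf_le_csInf ⟨0, ?_⟩ ⟨_, 0, 0, rfl⟩ ?_
  · rintro r ⟨w, b, rfl⟩
    exact mul_nonneg (by positivity) (sum_nonneg fun i _ => le_max_left _ _)
  · rintro r ⟨w, b, rfl⟩
    refine ⟨fun j => if j ∈ S then w j else 0, b, ?_⟩
    simp only [ite_mul, zero_mul, sum_ite_mem, inter_eq_right.mpr hST]

end TrainingError

theorem svea_individual_rationality_general (n m : ℕ)
    (x : Fin m → Fin n → ℝ) (y : Fin m → ℝ)
    (v : Finset (Fin n) → ℝ)
    (hv : ∀ S, v S = trEr n m x y ∅ - trEr n m x y S)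
    (e : Fin n → ℝ)
    (he : ∀ j, e j = trEr n m x y ∅ / (n : ℝ) - shapley n v j) :
    ∀ j : Fin n, e j ≤ trEr n m x y {j} := by
  intro j
  have hv_mono : Monotone v := fun S T hST => by
    simpa only [hv, sub_le_sub_iff_left] using trEr_antitone x y hST
  have hshapley := marginal_div_le_shapley hv_mono j
  rw [hv, hv, sub_self, sub_zero] at hshapley
  have hn : (1 : ℝ) ≤ n := by exact_mod_cast Fin.pos j
  calc e j = trEr n m x y ∅ / n - shapley n v j := he j
    _ ≤ trEr n m x y ∅ / n - (trEr n m x y ∅ - trEr n m x y {j}) / n := by gcongr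
    _ = trEr n m x y {j} / n := by ring
    _ ≤ trEr n m x y {j} := div_le_self (trEr_nonneg x y {j}) hn

/-- Theorem 2: the SVEA `e_j = tr_er ∅ / n - φ_j(v)` of the classification game
`v S = tr_er ∅ - tr_er S` satisfies individual rationality:
`e_j ≤ tr_er {j}` for every feature `j`. -/
theorem svea_individual_rationality (n m : ℕ) (hn : 1 ≤ n) (hm : 1 ≤ m)
    (x : Fin m → Fin n → ℝ) (y : Fin m → ℝ)
    (hy : ∀ i, y i = 1 ∨ y i = -1)
    (v : Finset (Fin n) → ℝ)
    (hv : ∀ S, v S = trEr n m x y ∅ - trEr n m x y S)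
    (e : Fin n → ℝ)
    (he : ∀ j, e j = trEr n m x y ∅ / (n : ℝ) - shapley n v j) :
    ∀ j : Fin n, e j ≤ trEr n m x y {j} :=
  svea_individual_rationality_general n m x y v hv e he
end
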